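/- arXiv:1801.08923 — 5 statements merged into one kernel-verified Lean document; each statement's English description precedes it below -/
import Mathlib

section
/- For d ≥ 2, the sum over all permutations σ of {1,…,d−1} of ∏_{j=1}^{d-1} (∑_{i=1}^j x_{σ(i)})^{-1}, evaluated at x = (2,1,1,…,1) (one part equal to 2 and d−2 parts equal to 1), equals 1/2. -/
/-!
For positive weights `x`, `∑_σ ∏_j (x_{σ 1} + ⋯ + x_{σ j})⁻¹ = ∏_i x_i⁻¹`. Split an ordering
according to its last entry `k`: the last partial sum is the total `S = ∑ x_i` and the other
entries order the remaining weights, so by induction the sum is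
`∑_k (x_k ∏_i x_i⁻¹) / S = ∏_i x_i⁻¹`. At `x = (2, 1, …, 1)` this product is `1/2`.
-/

open Finset

namespace Equiv

variable {n : ℕ} {ι : Type*} [DecidableEq ι]

def finSuccEquivSigmaNe : (Fin (n + 1) ≃ ι) ≃ Σ k : ι, (Fin n ≃ {i // i ≠ k}) :=
  (equivCongr (finSuccEquiv' (Fin.last n)) (Equiv.refl ι)).trans <|
    (sigmaFiberEquiv fun e : Option (Fin n) ≃ ι => e none).symm.trans <|
      sigmaCongrRight fun k => optionSubtype k

@[simp]
theorem finSuccEquivSigmaNe_symm_apply_castSucc (p : Σ k : ι, (Fin n ≃ {i // i ≠ k}))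
    (j : Fin n) : finSuccEquivSigmaNe.symm p j.castSucc = p.2 j := by
  simp [finSuccEquivSigmaNe, sigmaCongrRight_symm, finSuccEquiv'_last_apply_castSucc]

end Equiv

theorem Fin.prod_inv_sum_Iic_succ {K : Type*} [Semifield K] {n : ℕ}
    (y : Fin (n + 1) → K) :
    ∏ j, (∑ i ∈ Iic j, y i)⁻¹ = (∏ j : Fin n, (∑ i ∈ Iic j, y i.castSucc)⁻¹) * (∑ i, y i)⁻¹ := by
  simp only [Fin.prod_univ_castSucc, Fin.sum_Iic_castSucc, ← Fin.top_eq_last, Iic_top]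

variable {K : Type*} [Field K] [LinearOrder K] [IsStrictOrderedRing K]

theorem sum_equiv_prod_inv_sum_Iic {ι : Type*} [Fintype ι] [DecidableEq ι] {n : ℕ}
    (hn : Fintype.card ι = n) (x : ι → K) (hx : ∀ i, 0 < x i) :
    ∑ e : Fin n ≃ ι, ∏ j, (∑ i ∈ Iic j, x (e i))⁻¹ = ∏ i, (x i)⁻¹ := by
  induction n generalizing ι with
  | zero =>
    have : IsEmpty ι := Fintype.card_eq_zero_iff.mp hn
    simp [Fintype.card_equiv (Equiv.equivOfIsEmpty (Fin 0) ι)]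
  | succ n ih =>
    have : Nonempty ι := Fintype.card_pos_iff.mp (hn ▸ n.succ_pos)
    have hS : ∑ i, x i ≠ 0 := (sum_pos (fun i _ => hx i) univ_nonempty).ne'
    have hP (k : ι) : ∏ i : {i // i ≠ k}, (x i)⁻¹ = x k * ∏ i, (x i)⁻¹ := by
      rw [Fintype.prod_eq_mul_prod_subtype_ne _ k, mul_inv_cancel_left₀ (hx k).ne']
    calc ∑ e : Fin (n + 1) ≃ ι, ∏ j, (∑ i ∈ Iic j, x (e i))⁻¹
        = ∑ k : ι, ∑ e : Fin n ≃ {i // i ≠ k},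
            (∏ j : Fin n, (∑ i ∈ Iic j, x (e i))⁻¹) * (∑ i, x i)⁻¹ := by
          rw [← Equiv.finSuccEquivSigmaNe.symm.sum_comp, Fintype.sum_sigma]
          simp only [Fin.prod_inv_sum_Iic_succ, Equiv.finSuccEquivSigmaNe_symm_apply_castSucc,
            Equiv.sum_comp]
      _ = ∑ k : ι, (∏ i : {i // i ≠ k}, (x i)⁻¹) * (∑ i, x i)⁻¹ := by
          refine Fintype.sum_congr _ _ fun k => ?_
          rw [← Finset.sum_mul]
          congr 1
          exact ih (by simp [hn]) (fun i : {i // i ≠ k} => x i) fun i => hx i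
      _ = ∏ i, (x i)⁻¹ := by
          simp only [hP, ← sum_mul]
          rw [mul_right_comm, mul_inv_cancel₀ hS, one_mul]

/-- For `d ≥ 2`, the sum over σ ∈ S_{d-1} of ∏_j (∑_{i≤j} x_{σ(i)})⁻¹ at
x = (2,1,…,1) equals 1/2. -/
theorem sum_perm_prod_inv_two_ones (d : ℕ) (hd : 2 ≤ d)
    (x : Fin (d - 1) → ℝ) (hx : ∀ i, x i = if (i : ℕ) = 0 then 2 else 1) :
    ∑ σ : Equiv.Perm (Fin (d - 1)), ∏ j : Fin (d - 1),
      (∑ i ∈ Finset.Iic j, x (σ i))⁻¹ = 1 / 2 := by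
  have hpos (i : Fin (d - 1)) : 0 < x i := by
    rw [hx i]
    split_ifs <;> norm_num
  let i₀ : Fin (d - 1) := ⟨0, by omega⟩
  rw [sum_equiv_prod_inv_sum_Iic (Fintype.card_fin _) x hpos,
    Fintype.prod_eq_mul_prod_subtype_ne _ i₀, prod_eq_one fun i _ => ?_]
  · norm_num [hx, i₀]
  · rw [hx, if_neg fun h => i.2 (Fin.ext h), inv_one]
end

section
/- For positive integers x_1,…,x_m, as ε → 0⁺, ε^m · ∑_{σ∈S_m} ∏_{j=1}^m (exp(ε ∑_{i=1}^j x_{σ(i)}) − 1)^{-1} = ∑_{σ∈S_m} [ (∏_{j=1}^m s_j(σ))^{-1} − (ε/2) ∑_{r=1}^m s_r(σ)/∏_{j=1}^m s_j(σ) ] + O(ε²), where s_j(σ) = ∑_{i=1}^j x_{σ(i)}. -/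
/-!
Since `ε / (exp (ε s) - 1) = s⁻¹ - ε / 2 + O(ε²)` for `s > 0` (the first two terms of the
Bernoulli expansion of `t / (eᵗ - 1)`), the term of `σ` is a product of `m` first-order expansions
`sⱼ⁻¹ - ε / 2 + O(ε²)`. Multiplying out, its `ε`-coefficient is
`-(1/2) ∑ᵣ ∏_{j ≠ r} sⱼ⁻¹ = -(1/2) ∑ᵣ sᵣ / ∏ⱼ sⱼ`; summing over `σ` gives the expansion.
-/

open Filter Topology Asymptotics Real

section FirstOrder

variable {𝕜 : Type*} [NormedField 𝕜] {l : Filter 𝕜}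

theorem isBigO_sq_mul_of_le_nhds_zero (hl : l ≤ 𝓝 0) {f g : 𝕜 → 𝕜} {a b c d : 𝕜}
    (hf : (fun ε => f ε - (a + b * ε)) =O[l] (· ^ 2))
    (hg : (fun ε => g ε - (c + d * ε)) =O[l] (· ^ 2)) :
    (fun ε => f ε * g ε - (a * c + (a * d + b * c) * ε)) =O[l] (· ^ 2) := by
  have linear_isBigO_one (p q : 𝕜) : (fun ε => p + q * ε) =O[l] (fun _ => (1 : 𝕜)) :=
    (((continuous_const.add (continuous_const.mul continuous_id)).tendsto 0).mono_left
      hl).isBigO_one 𝕜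
  have sq_isBigO_one : (fun ε : 𝕜 => ε ^ 2) =O[l] (fun _ => (1 : 𝕜)) :=
    (((continuous_pow 2).tendsto 0).mono_left hl).isBigO_one 𝕜
  have hg_bdd : g =O[l] (fun _ => (1 : 𝕜)) := by
    simpa using (hg.trans sq_isBigO_one).add (linear_isBigO_one c d)
  have hsplit : (fun ε => f ε * g ε - (a * c + (a * d + b * c) * ε)) = fun ε =>
      (f ε - (a + b * ε)) * g ε + (a + b * ε) * (g ε - (c + d * ε)) + b * d * ε ^ 2 := by
    funext ε; ring
  rw [hsplit]
  have hfg : (fun ε => (f ε - (a + b * ε)) * g ε) =O[l] (· ^ 2) := by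
    simpa using hf.mul hg_bdd
  have hlg : (fun ε => (a + b * ε) * (g ε - (c + d * ε))) =O[l] (· ^ 2) := by
    simpa using (linear_isBigO_one a b).mul hg
  exact (hfg.add hlg).add ((isBigO_refl _ l).const_mul_left (b * d))

theorem isBigO_sq_prod_of_le_nhds_zero {ι : Type*} [DecidableEq ι] (hl : l ≤ 𝓝 0)
    (s : Finset ι) {f : ι → 𝕜 → 𝕜} {a b : ι → 𝕜}
    (hf : ∀ j ∈ s, (fun ε => f j ε - (a j + b j * ε)) =O[l] (· ^ 2)) :
    (fun ε => ∏ j ∈ s, f j ε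
        - (∏ j ∈ s, a j + (∑ r ∈ s, b r * ∏ j ∈ s.erase r, a j) * ε)) =O[l] (· ^ 2) := by
  induction s using Finset.induction_on with
  | empty => simpa using isBigO_zero (· ^ 2 : 𝕜 → 𝕜) l
  | insert i s hi ih =>
    have hcoeff : ∑ r ∈ insert i s, b r * ∏ j ∈ (insert i s).erase r, a j
        = a i * ∑ r ∈ s, b r * ∏ j ∈ s.erase r, a j + b i * ∏ j ∈ s, a j := by
      rw [Finset.sum_insert hi, Finset.erase_insert hi, Finset.mul_sum, add_comm]
      congr 1
      refine Finset.sum_congr rfl fun r hr => ?_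
      rw [Finset.erase_insert_of_ne (ne_of_mem_of_not_mem hr hi).symm,
        Finset.prod_insert fun h => hi (Finset.mem_of_mem_erase h)]
      ring
    simp only [Finset.prod_insert hi, hcoeff]
    exact isBigO_sq_mul_of_le_nhds_zero hl (hf i (Finset.mem_insert_self i s))
      (ih fun j hj => hf j (Finset.mem_insert_of_mem hj))

end FirstOrder

theorem abs_mul_inv_exp_sub_one_sub_le {t : ℝ} (ht : 0 < t) (ht1 : t ≤ 1) :
    |t * (exp t - 1)⁻¹ - (1 - t / 2)| ≤ t ^ 2 := by
  have htaylor : |exp t - (1 + t + t ^ 2 / 2)| ≤ t ^ 3 * (2 / 9) := by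
    have h := Real.exp_bound (n := 3) (by rwa [abs_of_pos ht]) (by norm_num)
    norm_num [abs_of_pos ht, Finset.sum_range_succ, Nat.factorial] at h
    convert h using 2
  have hlin : t ≤ exp t - 1 := by linarith [Real.add_one_le_exp t]
  have hpos : 0 < exp t - 1 := ht.trans_le hlin
  -- `t - (1 - t/2)(eᵗ - 1) = t³/4 - (1 - t/2)(eᵗ - 1 - t - t²/2)`
  have hnum : |t - (1 - t / 2) * (exp t - 1)| ≤ t ^ 3 := by
    rw [abs_le] at htaylor ⊢
    constructor <;> nlinarith [pow_pos ht 3, pow_pos ht 4]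
  rw [show t * (exp t - 1)⁻¹ - (1 - t / 2) = (t - (1 - t / 2) * (exp t - 1)) / (exp t - 1) by
    field_simp, abs_div, abs_of_pos hpos, div_le_iff₀ hpos]
  calc |t - (1 - t / 2) * (exp t - 1)| ≤ t ^ 2 * t := by linarith
    _ ≤ t ^ 2 * (exp t - 1) := by gcongr

theorem isBigO_mul_inv_exp_mul_sub_one {s : ℝ} (hs : 0 < s) :
    (fun ε => ε * (exp (ε * s) - 1)⁻¹ - (s⁻¹ + (-1 / 2) * ε)) =O[𝓝[>] 0] (· ^ 2) := by
  refine IsBigO.of_bound s ?_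
  filter_upwards [Ioo_mem_nhdsGT (one_div_pos.2 hs)] with ε ⟨hε, hεs⟩
  have ht : 0 < ε * s := mul_pos hε hs
  have ht1 : ε * s ≤ 1 := ((lt_div_iff₀ hs).1 hεs).le
  have hscale : ε * (exp (ε * s) - 1)⁻¹ - (s⁻¹ + (-1 / 2) * ε)
      = s⁻¹ * ((ε * s) * (exp (ε * s) - 1)⁻¹ - (1 - ε * s / 2)) := by
    field_simp
    ring
  rw [hscale, norm_mul, Real.norm_eq_abs, Real.norm_eq_abs, Real.norm_eq_abs,
    abs_of_pos (inv_pos.2 hs), abs_of_pos (pow_pos hε 2)]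
  calc s⁻¹ * |(ε * s) * (exp (ε * s) - 1)⁻¹ - (1 - ε * s / 2)| ≤ s⁻¹ * (ε * s) ^ 2 := by
        gcongr; exact abs_mul_inv_exp_sub_one_sub_le ht ht1
    _ = s * ε ^ 2 := by field_simp

theorem prod_erase_inv_eq {ι K : Type*} [DecidableEq ι] [Field K] {s : Finset ι} {S : ι → K}
    (hS : ∀ j ∈ s, S j ≠ 0) {r : ι} (hr : r ∈ s) :
    ∏ j ∈ s.erase r, (S j)⁻¹ = S r / ∏ j ∈ s, S j := by
  rw [← Finset.mul_prod_erase s S hr, Finset.prod_inv_distrib]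
  field_simp [hS r hr]

theorem isBigO_pow_card_mul_prod_inv_exp_sub_one {ι : Type*} [Fintype ι] [DecidableEq ι]
    (S : ι → ℝ) (hS : ∀ j, 0 < S j) :
    (fun ε => ε ^ Fintype.card ι * ∏ j, (exp (ε * S j) - 1)⁻¹
        - ((∏ j, S j)⁻¹ - ε / 2 * ∑ r, S r / ∏ j, S j)) =O[𝓝[>] 0] (· ^ 2) := by
  have h := isBigO_sq_prod_of_le_nhds_zero nhdsWithin_le_nhds Finset.univ
    (a := fun j => (S j)⁻¹) (b := fun _ => -1 / 2)
    fun j _ => isBigO_mul_inv_exp_mul_sub_one (hS j)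
  refine h.congr_left fun ε => ?_
  simp only [prod_erase_inv_eq (fun j _ => (hS j).ne') (Finset.mem_univ _),
    Finset.prod_mul_distrib, Finset.prod_const, Finset.card_univ, Finset.prod_inv_distrib,
    ← Finset.mul_sum]
  ring

/-- Semiclassical expansion of `ε^m Φ_ε(x₁,…,x_m)` up to order `O(ε²)`. -/
theorem semiclassical_expansion_Phi (m : ℕ) (x : Fin m → ℕ) (hx : ∀ i, 0 < x i) :
    (fun ε : ℝ =>
        ε ^ m * ∑ σ : Equiv.Perm (Fin m),
          ∏ j : Fin m, (Real.exp (ε * ∑ i ∈ Finset.Iic j, (x (σ i) : ℝ)) - 1)⁻¹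
        - ∑ σ : Equiv.Perm (Fin m),
            ((∏ j : Fin m, (∑ i ∈ Finset.Iic j, (x (σ i) : ℝ)))⁻¹
              - ε / 2 * ∑ r : Fin m, (∑ i ∈ Finset.Iic r, (x (σ i) : ℝ)) /
                  ∏ j : Fin m, (∑ i ∈ Finset.Iic j, (x (σ i) : ℝ))))
      =O[nhdsWithin 0 (Set.Ioi 0)] fun ε => ε ^ 2 := by
  have hterm (σ : Equiv.Perm (Fin m)) := isBigO_pow_card_mul_prod_inv_exp_sub_one
    (fun j => ∑ i ∈ Finset.Iic j, (x (σ i) : ℝ))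
    fun j => Finset.sum_pos (fun i _ => by exact_mod_cast hx (σ i)) ⟨j, Finset.mem_Iic.2 le_rfl⟩
  simp only [Fintype.card_fin] at hterm
  refine (IsBigO.fun_sum (s := Finset.univ) fun σ _ => hterm σ).congr_left fun ε => ?_
  rw [Finset.mul_sum, Finset.sum_sub_distrib]
end

section
/- For 0 < q < 1, the infinite product E'(q,z) = ∏_{i=1}^∞ (1 + q^i z) converges for all real z, and its power series coefficients are given by E'_i(q) = q^{i(i+1)/2} / ∏_{j=1}^i (1 − q^j) for i ≥ 1; that is, ∏_{i=1}^∞ (1 + q^i z) = 1 + ∑_{i=1}^∞ (q^{i(i+1)/2} / ∏_{j=1}^i (1−q^j)) z^i. -/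
/-!
The partial products `P n = ∏_{i<n} (1 + q^{i+1} X)` are polynomials whose coefficients
`c n k` obey two recurrences: splitting off the last factor gives
`c (n+1) (k+1) = c n (k+1) + q^{n+1} c n k`, and the functional equation
`P (n+1) (X) = (1 + qX) P n (qX)` gives `c (n+1) (k+1) = q^{k+1} (c n (k+1) + c n k)`.
For `0 ≤ q < 1` the first shows that `c n k` is nonnegative and increasing in `n`. The second
bounds it by `e k = ∏_{j<k} q^{j+1} / (1 - q^{j+1})` and, by induction on `k`, forces its limit
`L` to satisfy `L = q^{k+1} (L + e k)`, i.e. `L = e (k+1)`. Tannery's theorem, with the dominating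
series `∑ e k |z|^k` summable by the ratio test, then passes the limit `n → ∞` through the sum
over `k`.
-/

open Polynomial Filter Topology Finset

lemma Polynomial.tsum_coeff_mul_pow {R : Type*} [CommSemiring R] [TopologicalSpace R]
    (p : R[X]) (z : R) : ∑' k, p.coeff k * z ^ k = p.eval z := by
  rw [eval_eq_sum, sum_def]
  exact tsum_eq_sum fun k hk => by simp [notMem_support_iff.1 hk]

namespace EulerQBinomial

section CommSemiring

variable {R : Type*} [CommSemiring R] (q : R)

noncomputable def qProd (n : ℕ) : R[X] :=
  ∏ i ∈ range n, (1 + C (q ^ (i + 1)) * X)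

lemma eval_qProd (z : R) (n : ℕ) :
    (qProd q n).eval z = ∏ i ∈ range n, (1 + q ^ (i + 1) * z) := by
  simp [qProd, eval_prod]

lemma qProd_succ (n : ℕ) : qProd q (n + 1) = qProd q n * (1 + C (q ^ (n + 1)) * X) :=
  prod_range_succ _ n

lemma qProd_succ_eq_mul_comp (n : ℕ) :
    qProd q (n + 1) = (1 + C q * X) * (qProd q n).comp (C q * X) := by
  have factor_comp (i : ℕ) :
      (1 + C (q ^ (i + 1)) * X).comp (C q * X) = 1 + C (q ^ (i + 1 + 1)) * X := by
    rw [add_comp, one_comp, mul_comp, C_comp, X_comp, ← mul_assoc, ← C_mul, ← pow_succ]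
  rw [qProd, prod_range_succ', qProd, Polynomial.prod_comp]
  simp only [factor_comp, zero_add, pow_one]
  rw [mul_comm]

lemma coeff_qProd_zero (n : ℕ) : (qProd q n).coeff 0 = 1 := by
  simp [coeff_zero_eq_eval_zero, eval_qProd]

lemma coeff_qProd_zero_succ (k : ℕ) : (qProd q 0).coeff (k + 1) = 0 := by
  simp [qProd, coeff_one]

lemma coeff_qProd_succ_succ (n k : ℕ) :
    (qProd q (n + 1)).coeff (k + 1) =
      (qProd q n).coeff (k + 1) + q ^ (n + 1) * (qProd q n).coeff k := by
  rw [qProd_succ, mul_add, mul_one, coeff_add, ← mul_assoc, coeff_mul_X, coeff_mul_C]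
  ring

lemma coeff_qProd_succ_succ' (n k : ℕ) :
    (qProd q (n + 1)).coeff (k + 1) =
      q ^ (k + 1) * ((qProd q n).coeff (k + 1) + (qProd q n).coeff k) := by
  rw [qProd_succ_eq_mul_comp, add_mul, one_mul, mul_assoc, coeff_add, coeff_C_mul, coeff_X_mul,
    comp_C_mul_X_coeff, comp_C_mul_X_coeff]
  ring

end CommSemiring

section Field

variable {K : Type*} [Field K] (q : K)

noncomputable def eulerCoeff (k : ℕ) : K :=
  ∏ j ∈ range k, q ^ (j + 1) / (1 - q ^ (j + 1))

lemma eulerCoeff_zero : eulerCoeff q 0 = 1 := prod_range_zero _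

lemma eulerCoeff_succ (k : ℕ) :
    eulerCoeff q (k + 1) = eulerCoeff q k * (q ^ (k + 1) / (1 - q ^ (k + 1))) :=
  prod_range_succ _ k

lemma eulerCoeff_eq_div (k : ℕ) :
    eulerCoeff q k = q ^ (k * (k + 1) / 2) / ∏ j ∈ range k, (1 - q ^ (j + 1)) := by
  have gauss : ∑ j ∈ range k, (j + 1) = k * (k + 1) / 2 := by
    simpa [sum_range_id, mul_comm] using (sum_range_succ' (fun j => j) k).symm
  rw [eulerCoeff, prod_div_distrib, prod_pow_eq_pow_sum, gauss]

end Field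

section Real

variable {q : ℝ}

lemma coeff_qProd_nonneg (hq : 0 ≤ q) (n k : ℕ) : 0 ≤ (qProd q n).coeff k := by
  induction n generalizing k with
  | zero => cases k <;> simp [coeff_qProd_zero, coeff_qProd_zero_succ]
  | succ n ih =>
    cases k with
    | zero => simp [coeff_qProd_zero]
    | succ k =>
      rw [coeff_qProd_succ_succ]
      have := ih k
      have := ih (k + 1)
      positivity

lemma coeff_qProd_le_succ (hq : 0 ≤ q) (n k : ℕ) :
    (qProd q n).coeff k ≤ (qProd q (n + 1)).coeff k := by
  cases k with
  | zero => simp [coeff_qProd_zero]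
  | succ k =>
    rw [coeff_qProd_succ_succ, le_add_iff_nonneg_right]
    exact mul_nonneg (pow_nonneg hq _) (coeff_qProd_nonneg hq n k)

lemma coeff_qProd_le_eulerCoeff (hq0 : 0 ≤ q) (hq1 : q < 1) (n k : ℕ) :
    (qProd q n).coeff k ≤ eulerCoeff q k := by
  induction k generalizing n with
  | zero => rw [coeff_qProd_zero, eulerCoeff_zero]
  | succ k ih =>
    have hstep : (qProd q (n + 1)).coeff (k + 1) ≤ eulerCoeff q (k + 1) := by
      have hmono := coeff_qProd_le_succ hq0 n (k + 1)
      have hrec := coeff_qProd_succ_succ' q n k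
      have hk := ih n
      have hd : 0 < 1 - q ^ (k + 1) := sub_pos.2 (pow_lt_one₀ hq0 hq1 k.succ_ne_zero)
      rw [eulerCoeff_succ, mul_div_assoc', le_div_iff₀ hd]
      nlinarith [pow_nonneg hq0 (k + 1)]
    exact (coeff_qProd_le_succ hq0 n (k + 1)).trans hstep

lemma tendsto_coeff_qProd (hq0 : 0 ≤ q) (hq1 : q < 1) (k : ℕ) :
    Tendsto (fun n => (qProd q n).coeff k) atTop (𝓝 (eulerCoeff q k)) := by
  induction k with
  | zero => simpa only [coeff_qProd_zero, eulerCoeff_zero] using tendsto_const_nhds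
  | succ k ih =>
    obtain ⟨L, hL⟩ : ∃ L, Tendsto (fun n => (qProd q n).coeff (k + 1)) atTop (𝓝 L) :=
      ⟨_, tendsto_atTop_ciSup (monotone_nat_of_le_succ fun n => coeff_qProd_le_succ hq0 n _)
        ⟨eulerCoeff q (k + 1), by
          rintro _ ⟨n, rfl⟩
          exact coeff_qProd_le_eulerCoeff hq0 hq1 n _⟩⟩
    have hfix : L = q ^ (k + 1) * (L + eulerCoeff q k) := by
      refine tendsto_nhds_unique ((tendsto_add_atTop_iff_nat 1).2 hL) ?_
      simpa only [coeff_qProd_succ_succ'] using tendsto_const_nhds.mul (hL.add ih)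
    have hd : 1 - q ^ (k + 1) ≠ 0 := (sub_pos.2 (pow_lt_one₀ hq0 hq1 k.succ_ne_zero)).ne'
    convert hL
    rw [eulerCoeff_succ, mul_div_assoc', div_eq_iff hd]
    linarith

lemma summable_eulerCoeff_mul_pow (hq : |q| < 1) (z : ℝ) :
    Summable fun k => eulerCoeff q k * z ^ k := by
  have hpow : Tendsto (fun k : ℕ => q ^ (k + 1)) atTop (𝓝 0) :=
    (tendsto_add_atTop_iff_nat 1).2 (tendsto_pow_atTop_nhds_zero_of_abs_lt_one hq)
  have hratio : Tendsto (fun k : ℕ => ‖q ^ (k + 1) / (1 - q ^ (k + 1)) * z‖) atTop (𝓝 0) := by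
    simpa using ((hpow.div (tendsto_const_nhds.sub hpow) (by norm_num)).mul_const z).norm
  refine summable_of_ratio_norm_eventually_le (r := 1 / 2) (by norm_num) ?_
  filter_upwards [hratio.eventually_le_const (by norm_num : (0 : ℝ) < 1 / 2)] with k hk
  calc ‖eulerCoeff q (k + 1) * z ^ (k + 1)‖
      = ‖q ^ (k + 1) / (1 - q ^ (k + 1)) * z‖ * ‖eulerCoeff q k * z ^ k‖ := by
        rw [eulerCoeff_succ, ← norm_mul, pow_succ]
        ring_nf
    _ ≤ 1 / 2 * ‖eulerCoeff q k * z ^ k‖ := by gcongr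

lemma multipliable_one_add_pow_mul (hq : |q| < 1) (z : ℝ) :
    Multipliable fun i : ℕ => 1 + q ^ (i + 1) * z :=
  Real.multipliable_one_add_of_summable
    (((summable_geometric_of_abs_lt_one hq).mul_right (q * z)).congr fun i => by ring)

lemma tendsto_prod_one_add_pow_mul (hq0 : 0 ≤ q) (hq1 : q < 1) (z : ℝ) :
    Tendsto (fun n => ∏ i ∈ range n, (1 + q ^ (i + 1) * z)) atTop
      (𝓝 (∑' k, eulerCoeff q k * z ^ k)) := by
  have hbound := summable_eulerCoeff_mul_pow (abs_lt.2 ⟨by linarith, hq1⟩) |z|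
  have hdom : ∀ n k, ‖(qProd q n).coeff k * z ^ k‖ ≤ eulerCoeff q k * |z| ^ k := fun n k => by
    rw [norm_mul, norm_pow, Real.norm_eq_abs, Real.norm_eq_abs,
      abs_of_nonneg (coeff_qProd_nonneg hq0 n k)]
    gcongr
    exact coeff_qProd_le_eulerCoeff hq0 hq1 n k
  simpa only [tsum_coeff_mul_pow, eval_qProd] using
    tendsto_tsum_of_dominated_convergence hbound
      (fun k => (tendsto_coeff_qProd hq0 hq1 k).mul_const (z ^ k)) (.of_forall hdom)

lemma tprod_one_add_pow_mul (hq0 : 0 ≤ q) (hq1 : q < 1) (z : ℝ) :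
    ∏' i : ℕ, (1 + q ^ (i + 1) * z) = ∑' k, eulerCoeff q k * z ^ k :=
  tendsto_nhds_unique
    (multipliable_one_add_pow_mul (abs_lt.2 ⟨by linarith, hq1⟩) z).hasProd.tendsto_prod_nat
    (tendsto_prod_one_add_pow_mul hq0 hq1 z)

end Real

end EulerQBinomial

open EulerQBinomial in
/-- Euler's identity: `∏_{i=1}^∞ (1 + qⁱ z)` converges for all real `z`, and for
`|qz| < 1` equals `1 + ∑_{i≥1} (q^{i(i+1)/2} / ∏_{j=1}^i (1 - q^j)) z^i`. -/
theorem euler_q_binomial (q : ℝ) (hq : 0 < q) (hq1 : q < 1) :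
    (∀ z : ℝ, Multipliable (fun i : ℕ => 1 + q ^ (i + 1) * z)) ∧
    ∀ z : ℝ, |q * z| < 1 →
      Summable (fun i : ℕ =>
        q ^ ((i + 1) * (i + 2) / 2) / (∏ j ∈ Finset.range (i + 1), (1 - q ^ (j + 1)))
          * z ^ (i + 1)) ∧
      ∏' i : ℕ, (1 + q ^ (i + 1) * z)
        = 1 + ∑' i : ℕ,
            q ^ ((i + 1) * (i + 2) / 2) / (∏ j ∈ Finset.range (i + 1), (1 - q ^ (j + 1)))
              * z ^ (i + 1) := by
  have hq_abs : |q| < 1 := abs_lt.2 ⟨by linarith, hq1⟩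
  refine ⟨multipliable_one_add_pow_mul hq_abs, fun z _ => ?_⟩
  have hsum := summable_eulerCoeff_mul_pow hq_abs z
  simp only [← eulerCoeff_eq_div]
  refine ⟨(summable_nat_add_iff 1).2 hsum, ?_⟩
  rw [tprod_one_add_pow_mul hq.le hq1, hsum.tsum_eq_zero_add, eulerCoeff_zero, pow_zero, mul_one]
end

section
/- For fixed real z ≥ 0, lim_{ε→0⁺} ∏_{i=1}^∞ (1 + e^{−iε} ε z) = e^z. -/
/-!
Taking logarithms, `x / (1 + x) ≤ log (1 + x) ≤ x` for `x ≥ 0`. The terms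
`xᵢ = e^{-(i+1)ε} ε z` sum to the geometric series `ε z / (e^ε - 1)` and are all at most `ε z`,
so the logarithm of the product lies between `ε z / ((e^ε - 1)(1 + ε z))` and `ε z / (e^ε - 1)`.
Both bounds tend to `z` because `ε / (e^ε - 1) → 1`, the reciprocal of the derivative of `exp` at `0`.
-/

open Filter Topology Real

namespace Real

variable {ι : Type*} {x : ι → ℝ} {s : ℝ}

lemma tprod_one_add_le_exp (hx : ∀ i, 0 ≤ x i) (hs : HasSum x s) :
    ∏' i, (1 + x i) ≤ exp s := by
  have hpos : ∀ i, 0 < 1 + x i := fun i => by linarith [hx i]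
  rw [← rexp_tsum_eq_tprod hpos (summable_log_one_add_of_summable hs.summable), exp_le_exp,
    ← hs.tsum_eq]
  refine (summable_log_one_add_of_summable hs.summable).tsum_le_tsum (fun i => ?_) hs.summable
  linarith [log_le_sub_one_of_pos (hpos i)]

lemma exp_div_le_tprod_one_add {c : ℝ} (hx : ∀ i, 0 ≤ x i) (hxc : ∀ i, x i ≤ c)
    (hs : HasSum x s) : exp (s / (1 + c)) ≤ ∏' i, (1 + x i) := by
  have hpos : ∀ i, 0 < 1 + x i := fun i => by linarith [hx i]
  rw [← rexp_tsum_eq_tprod hpos (summable_log_one_add_of_summable hs.summable), exp_le_exp,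
    ← (hs.div_const (1 + c)).tsum_eq]
  refine (hs.div_const _).summable.tsum_le_tsum (fun i => ?_)
    (summable_log_one_add_of_summable hs.summable)
  calc x i / (1 + c) ≤ x i / (1 + x i) :=
        div_le_div_of_nonneg_left (hx i) (hpos i) (by linarith [hxc i])
    _ = 1 - (1 + x i)⁻¹ := by field_simp [(hpos i).ne']; ring
    _ ≤ log (1 + x i) := one_sub_inv_le_log_of_pos (hpos i)

end Real

lemma hasSum_exp_neg_succ_mul {ε : ℝ} (hε : 0 < ε) :
    HasSum (fun i : ℕ => rexp (-((i : ℝ) + 1) * ε)) (rexp ε - 1)⁻¹ := by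
  have hr : rexp (-ε) < 1 := exp_lt_one_iff.mpr (neg_neg_of_pos hε)
  have hterm : ∀ i : ℕ, rexp (-((i : ℝ) + 1) * ε) = rexp (-ε) * rexp (-ε) ^ i := fun i => by
    rw [← pow_succ', ← exp_nat_mul]; push_cast; ring_nf
  have hval : (rexp ε - 1)⁻¹ = rexp (-ε) * (1 - rexp (-ε))⁻¹ := by
    have : rexp ε - 1 ≠ 0 := (sub_pos.mpr (one_lt_exp_iff.mpr hε)).ne'
    rw [exp_neg]
    field_simp
  simp only [hterm, hval]
  exact (hasSum_geometric_of_lt_one (exp_nonneg _) hr).mul_left _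

lemma tendsto_div_exp_sub_one : Tendsto (fun t => t / (rexp t - 1)) (𝓝[≠] 0) (𝓝 1) := by
  have := ((hasDerivAt_exp 0).tendsto_slope_zero).inv₀ (exp_ne_zero 0)
  simp only [zero_add, exp_zero, inv_one, smul_eq_mul] at this
  exact this.congr fun t => by rw [mul_inv, inv_inv, div_eq_mul_inv]

/-- Classical limit: `lim_{ε→0⁺} ∏_{i=1}^∞ (1 + e^{−iε} ε z) = e^z` for `z ≥ 0`. -/
theorem classical_limit_Eprime (z : ℝ) (hz : 0 ≤ z) :
    Tendsto (fun ε : ℝ => ∏' i : ℕ, (1 + Real.exp (-((i : ℝ) + 1) * ε) * ε * z))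
      (nhdsWithin 0 (Set.Ioi 0)) (nhds (Real.exp z)) := by
  have hlim : Tendsto (fun ε => (rexp ε - 1)⁻¹ * (ε * z)) (𝓝[>] 0) (𝓝 z) := by
    have := (tendsto_div_exp_sub_one.mono_left (nhdsGT_le_nhdsNE 0)).mul_const z
    rw [one_mul] at this
    exact this.congr fun ε => by ring
  have hlim' : Tendsto (fun ε => (rexp ε - 1)⁻¹ * (ε * z) / (1 + ε * z)) (𝓝[>] 0) (𝓝 z) := by
    have hden : Tendsto (fun ε : ℝ => 1 + ε * z) (𝓝[>] 0) (𝓝 1) := by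
      simpa using ((tendsto_id.mul_const z).const_add 1).mono_left (nhdsWithin_le_nhds (a := 0))
    have := hlim.div hden one_ne_zero
    rwa [div_one] at this
  have hbounds : ∀ ε : ℝ, 0 < ε →
      rexp ((rexp ε - 1)⁻¹ * (ε * z) / (1 + ε * z)) ≤
        ∏' i : ℕ, (1 + rexp (-((i : ℝ) + 1) * ε) * ε * z) ∧
      ∏' i : ℕ, (1 + rexp (-((i : ℝ) + 1) * ε) * ε * z) ≤ rexp ((rexp ε - 1)⁻¹ * (ε * z)) := by
    intro ε hε
    have hsum := (hasSum_exp_neg_succ_mul hε).mul_right (ε * z)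
    have hx : ∀ i : ℕ, 0 ≤ rexp (-((i : ℝ) + 1) * ε) * (ε * z) := fun i => by positivity
    have hxc : ∀ i : ℕ, rexp (-((i : ℝ) + 1) * ε) * (ε * z) ≤ ε * z := fun i =>
      mul_le_of_le_one_left (by positivity) (exp_le_one_iff.mpr (by nlinarith))
    simp only [mul_assoc]
    exact ⟨exp_div_le_tprod_one_add hx hxc hsum, tprod_one_add_le_exp hx hsum⟩
  refine tendsto_of_tendsto_of_tendsto_of_le_of_le' hlim'.rexp hlim.rexp ?_ ?_ <;>
    filter_upwards [self_mem_nhdsWithin] with ε hε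
  exacts [(hbounds ε hε).1, (hbounds ε hε).2]
end

section
/- For fixed real z with 0 ≤ z < 1, lim_{ε→0⁺} ∏_{k=0}^∞ (1 − e^{−kε} ε z)^{-1} = e^z. -/
/-!
Taking logarithms, the elementary bounds `x ≤ -log (1 - x) ≤ x / (1 - x)` squeeze the logarithm of
`∏ (1 - qᵏ a)⁻¹`, for `q = e^{-ε}` and `a = εz`, between the geometric sum `a / (1 - q)` and
`a / ((1 - q)(1 - a))`. Both bounds tend to `z`, because `ε / (1 - e^{-ε}) → 1` as `ε → 0⁺`.
-/

open Filter Real Topology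

lemma le_neg_log_one_sub {x : ℝ} (hx : x < 1) : x ≤ -log (1 - x) := by
  linarith [log_le_sub_one_of_pos (sub_pos.2 hx)]

lemma neg_log_one_sub_le {x : ℝ} (hx : x < 1) : -log (1 - x) ≤ x / (1 - x) := by
  have hpos : 0 < 1 - x := sub_pos.2 hx
  calc -log (1 - x) = log (1 - x)⁻¹ := (log_inv _).symm
    _ ≤ (1 - x)⁻¹ - 1 := log_le_sub_one_of_pos (inv_pos.2 hpos)
    _ = x / (1 - x) := by field_simp; ring

section InvOneSub

variable {x : ℕ → ℝ} {c : ℝ} (hx0 : ∀ k, 0 ≤ x k) (hxc : ∀ k, x k ≤ c) (hc : c < 1)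
include hx0 hxc hc

lemma neg_log_one_sub_le_div (k : ℕ) : -log (1 - x k) ≤ x k / (1 - c) :=
  (neg_log_one_sub_le ((hxc k).trans_lt hc)).trans <|
    div_le_div_of_nonneg_left (hx0 k) (sub_pos.2 hc) (by linarith [hxc k])

variable (hx : Summable x)
include hx

lemma summable_neg_log_one_sub : Summable fun k => -log (1 - x k) :=
  (hx.div_const _).of_nonneg_of_le
    (fun k => (hx0 k).trans (le_neg_log_one_sub ((hxc k).trans_lt hc)))
    (neg_log_one_sub_le_div hx0 hxc hc)

lemma hasProd_inv_one_sub :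
    HasProd (fun k => (1 - x k)⁻¹) (exp (∑' k, -log (1 - x k))) := by
  refine (summable_neg_log_one_sub hx0 hxc hc hx).hasSum.rexp.congr_fun fun k => ?_
  rw [Function.comp_apply, exp_neg, exp_log (sub_pos.2 ((hxc k).trans_lt hc))]

lemma exp_tsum_le_tprod_inv_one_sub : exp (∑' k, x k) ≤ ∏' k, (1 - x k)⁻¹ := by
  rw [(hasProd_inv_one_sub hx0 hxc hc hx).tprod_eq, exp_le_exp]
  exact hx.tsum_le_tsum (fun k => le_neg_log_one_sub ((hxc k).trans_lt hc))
    (summable_neg_log_one_sub hx0 hxc hc hx)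

lemma tprod_inv_one_sub_le_exp : ∏' k, (1 - x k)⁻¹ ≤ exp ((∑' k, x k) / (1 - c)) := by
  rw [(hasProd_inv_one_sub hx0 hxc hc hx).tprod_eq, exp_le_exp, ← tsum_div_const]
  exact (summable_neg_log_one_sub hx0 hxc hc hx).tsum_le_tsum (neg_log_one_sub_le_div hx0 hxc hc)
    (hx.div_const _)

end InvOneSub

lemma tprod_inv_one_sub_geometric_mem_Icc {q a : ℝ} (hq0 : 0 ≤ q) (hq1 : q < 1) (ha0 : 0 ≤ a)
    (ha1 : a < 1) :
    ∏' k : ℕ, (1 - q ^ k * a)⁻¹ ∈ Set.Icc (exp (a / (1 - q))) (exp (a / (1 - q) / (1 - a))) := by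
  have hx0 (k : ℕ) : 0 ≤ q ^ k * a := by positivity
  have hxa (k : ℕ) : q ^ k * a ≤ a := mul_le_of_le_one_left ha0 (pow_le_one₀ hq0 hq1.le)
  have hx : Summable fun k : ℕ => q ^ k * a := (summable_geometric_of_lt_one hq0 hq1).mul_right a
  have hsum : ∑' k : ℕ, q ^ k * a = a / (1 - q) := by
    rw [tsum_mul_right, tsum_geometric_of_lt_one hq0 hq1, inv_mul_eq_div]
  rw [← hsum]
  exact ⟨exp_tsum_le_tprod_inv_one_sub hx0 hxa ha1 hx, tprod_inv_one_sub_le_exp hx0 hxa ha1 hx⟩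

lemma tendsto_div_one_sub_exp_neg :
    Tendsto (fun ε : ℝ => ε / (1 - exp (-ε))) (𝓝[>] 0) (𝓝 1) := by
  have hderiv : HasDerivAt (fun t => 1 - exp (-t)) 1 0 := by
    simpa using (hasDerivAt_neg (0 : ℝ)).exp.const_sub 1
  have := hderiv.tendsto_slope_zero_right.inv₀ one_ne_zero
  simpa [div_eq_mul_inv, mul_comm] using this

/-- Classical limit of `H(q,z)`: `lim_{ε→0⁺} ∏_{k=0}^∞ (1 − e^{−kε} ε z)⁻¹ = e^z`
for `0 ≤ z < 1`. -/
theorem classical_limit_H (z : ℝ) (hz0 : 0 ≤ z) (hz1 : z < 1) :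
    Tendsto (fun ε : ℝ => ∏' k : ℕ, (1 - Real.exp (-(k : ℝ) * ε) * ε * z)⁻¹)
      (nhdsWithin 0 (Set.Ioi 0)) (nhds (Real.exp z)) := by
  set L : ℝ → ℝ := fun ε => ε * z / (1 - exp (-ε))
  have hL : Tendsto L (𝓝[>] 0) (𝓝 z) := by
    simpa [L, mul_div_right_comm] using tendsto_div_one_sub_exp_neg.mul_const z
  have hU : Tendsto (fun ε => L ε / (1 - ε * z)) (𝓝[>] 0) (𝓝 z) := by
    have hden : Tendsto (fun ε : ℝ => 1 - ε * z) (𝓝[>] 0) (𝓝 1) :=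
      tendsto_nhdsWithin_of_tendsto_nhds
        (by simpa using ((continuous_mul_const z).tendsto 0).const_sub 1)
    simpa [Pi.div_def] using hL.div hden one_ne_zero
  have hbounds : ∀ᶠ ε in 𝓝[>] 0, ∏' k : ℕ, (1 - exp (-(k : ℝ) * ε) * ε * z)⁻¹ ∈
      Set.Icc (exp (L ε)) (exp (L ε / (1 - ε * z))) := by
    filter_upwards [Ioo_mem_nhdsGT one_pos] with ε ⟨hε0, hε1⟩
    have hfactor (k : ℕ) : exp (-(k : ℝ) * ε) * ε * z = exp (-ε) ^ k * (ε * z) := by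
      rw [neg_mul, ← mul_neg, exp_nat_mul, mul_assoc]
    simp only [hfactor]
    exact tprod_inv_one_sub_geometric_mem_Icc (exp_nonneg _) (exp_lt_one_iff.2 (by linarith))
      (by positivity) (by nlinarith)
  exact tendsto_of_tendsto_of_tendsto_of_le_of_le' hL.rexp hU.rexp
    (hbounds.mono fun _ h => h.1) (hbounds.mono fun _ h => h.2)
end
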